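/- arXiv:1706.02177 — 2 statements merged into one kernel-verified Lean document; each statement's English description precedes it below -/
import Mathlib

section
/- If p, q, l, m ∈ {1, …, k} satisfy a_p + a_q = a_l + a_m, then B_{pk}·B_{qk} = B_{lk}·B_{mk}. (This is the pre-antipode form of the paper's Lemma 3.3, obtained by comparing the coefficient of χ_{2a_k} on both sides of α(χ_{a_p})·α(χ_{a_q}) = α(χ_{a_l})·α(χ_{a_m}).) -/
/-- The character `χ_n : 𝕋 → ℂ`, `χ_n z = z ^ n`, as a continuous map on the
circle group `𝕋 = {z ∈ ℂ : |z| = 1}`. -/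
noncomputable def chi (n : ℤ) : C(Circle, ℂ) :=
  { toFun := fun z => ((z ^ n : Circle) : ℂ)
    continuous_toFun := by
      exact continuous_induced_dom.comp (continuous_zpow n) }

/-!
Each `α (χ_{a_i})` is the evaluation on the circle of the Laurent polynomial
`P_i = ∑_j B_ij T^{a_j} + ∑_j C_ij T^{-a_j}` with coefficients in `Q`. Evaluation on the circle is
a ring homomorphism `Q[T, T⁻¹] → (𝕋 → Q)` (the scalars `z ^ n` are central in `Q`), and it is
injective because the characters `z ↦ z ^ n` are linearly independent and linear functionals
separate the points of `Q`. So `χ_{a_p} χ_{a_q} = χ_{a_l} χ_{a_m}` lifts to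
`P_p P_q = P_l P_m`. Every exponent of `P_i` is at most `a_k`, with coefficient `B_ik` at `T^{a_k}`,
so the coefficients of `T^{2 a_k}` in the two products are `B_pk B_qk` and `B_lk B_mk`.
-/

theorem LinearIndependent.eq_zero_of_forall_sum_smul_eq_zero {K X V ι : Type*} [Field K]
    [AddCommGroup V] [Module K V] {f : ι → X → K} (hf : LinearIndependent K f)
    {s : Finset ι} {c : ι → V} (h : ∀ x, ∑ i ∈ s, f i x • c i = 0) :
    ∀ i ∈ s, c i = 0 := by
  intro i hi
  refine (Module.forall_dual_apply_eq_zero_iff K (c i)).1 fun φ => ?_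
  refine linearIndependent_iff'.1 hf s (fun j => φ (c j)) (funext fun x => ?_) i hi
  simpa [Finset.sum_apply, mul_comm] using congrArg φ (h x)

namespace Circle

theorem exists_zpow_ne_one {d : ℤ} (hd : d ≠ 0) : ∃ z : Circle, z ^ d ≠ 1 :=
  ⟨exp (Real.pi / d), by
    rw [← exp_intCast_mul, mul_div_cancel₀ _ (Int.cast_ne_zero.2 hd)]
    exact exp_pi_ne_one⟩

theorem linearIndependent_coe_zpow :
    LinearIndependent ℂ (fun (n : ℤ) (z : Circle) => (z : ℂ) ^ n) := by
  refine (linearIndependent_monoidHom Circle ℂ).comp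
    (fun n : ℤ => coeHom.comp (zpowGroupHom n)) fun m n hmn => ?_
  by_contra hne
  obtain ⟨z, hz⟩ := exists_zpow_ne_one (sub_ne_zero.2 hne)
  have hzmn : z ^ m = z ^ n := coe_injective (DFunLike.congr_fun hmn z)
  exact hz (by rw [zpow_sub, hzmn, mul_inv_cancel])

end Circle

theorem chi_add (m n : ℤ) : chi (m + n) = chi m * chi n := by
  ext z
  simp [chi, zpow_add]

namespace AddMonoidAlgebra

section TopCoeff

variable {R A : Type*} [Semiring R] [AddMonoid A] [LinearOrder A] [AddLeftStrictMono A]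
  [AddRightStrictMono A]

theorem coeff_mul_add_of_coeff_eq_zero_of_lt {f g : R[A]} {a b : A}
    (hf : ∀ c, a < c → f.coeff c = 0) (hg : ∀ c, b < c → g.coeff c = 0) :
    (f * g).coeff (a + b) = f.coeff a * g.coeff b := by
  classical
  have hfa : ∀ c ∈ f.coeff.support, c ≤ a :=
    fun c hc => not_lt.1 fun h => Finsupp.mem_support_iff.1 hc (hf c h)
  have hgb : ∀ d ∈ g.coeff.support, d ≤ b :=
    fun d hd => not_lt.1 fun h => Finsupp.mem_support_iff.1 hd (hg d h)
  rw [coeff_mul, Finsupp.sum, Finset.sum_eq_single a]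
  · rw [Finsupp.sum, Finset.sum_eq_single b, if_pos rfl]
    · exact fun d hd hdb =>
        if_neg fun h => hdb ((add_eq_add_iff_eq_and_eq le_rfl (hgb d hd)).1 h).2
    · intro hb
      simp [Finsupp.notMem_support_iff.1 hb]
  · exact fun c hc hca => Finset.sum_eq_zero fun d hd =>
      if_neg fun h => hca ((add_eq_add_iff_eq_and_eq (hfa c hc) (hgb d hd)).1 h).1
  · intro ha
    simp [Finsupp.notMem_support_iff.1 ha]

end TopCoeff

section CircleEval

variable (Q : Type*) [Ring Q] [Algebra ℂ Q]

noncomputable def circleEval : Q[ℤ] →+* (Circle → Q) :=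
  liftNCRingHom (Pi.constRingHom Circle Q)
    (MonoidHom.pi fun z =>
      (algebraMap ℂ Q : ℂ →* Q).comp (Circle.coeHom.comp (zpowersHom Circle z)))
    fun _ _ => .pi fun _ => Algebra.commute_algebraMap_right _ _

variable {Q}

theorem circleEval_single (n : ℤ) (b : Q) (z : Circle) :
    circleEval Q (single n b) z = (z : ℂ) ^ n • b := by
  unfold circleEval
  rw [liftNCRingHom_single, Algebra.smul_def, Algebra.commutes]
  rfl

theorem circleEval_injective : Function.Injective (circleEval Q) := by
  refine (injective_iff_map_eq_zero _).2 fun f hf => ?_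
  have hsum : ∀ z : Circle, ∑ n ∈ f.coeff.support, (z : ℂ) ^ n • f.coeff n = 0 := by
    intro z
    have := congrFun hf z
    rw [← sum_coeff_single f, Finsupp.sum, map_sum, Finset.sum_apply] at this
    simpa only [circleEval_single, Pi.zero_apply] using this
  ext n
  by_cases hn : n ∈ f.coeff.support
  · exact Circle.linearIndependent_coe_zpow.eq_zero_of_forall_sum_smul_eq_zero hsum n hn
  · simpa using hn

end CircleEval

section PlusMinus

variable {Q ι : Type*} [Fintype ι]

noncomputable def pmLaurent [Semiring Q] (a : ι → ℤ) (b c : ι → Q) : Q[ℤ] :=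
  ∑ j, single (a j) (b j) + ∑ j, single (-a j) (c j)

theorem circleEval_pmLaurent [Ring Q] [Algebra ℂ Q] (a : ι → ℤ) (b c : ι → Q) (z : Circle) :
    circleEval Q (pmLaurent a b c) z = ∑ j, (z : ℂ) ^ a j • b j + ∑ j, (z : ℂ) ^ (-a j) • c j := by
  simp only [pmLaurent, map_add, map_sum, Pi.add_apply, Finset.sum_apply, circleEval_single]

variable [Semiring Q] {a : ι → ℤ} {b c : ι → Q} {t : ι}

theorem coeff_pmLaurent (a : ι → ℤ) (b c : ι → Q) (n : ℤ) :
    (pmLaurent a b c).coeff n =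
      ∑ j, (if a j = n then b j else 0) + ∑ j, (if -a j = n then c j else 0) := by
  classical
  simp only [pmLaurent, coeff_add, coeff_sum, coeff_single, Finsupp.add_apply,
    Finsupp.finsetSum_apply, Finsupp.single_apply]

theorem coeff_pmLaurent_of_lt (ha : ∀ j, 0 < a j) (ht : ∀ j, a j ≤ a t) {n : ℤ} (hn : a t < n) :
    (pmLaurent a b c).coeff n = 0 := by
  rw [coeff_pmLaurent, Finset.sum_eq_zero, Finset.sum_eq_zero, add_zero]
  all_goals exact fun j _ => if_neg (by linarith [ha j, ht j])

theorem coeff_pmLaurent_self (ha : ∀ j, 0 < a j) (ht : ∀ j ≠ t, a j < a t) :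
    (pmLaurent a b c).coeff (a t) = b t := by
  rw [coeff_pmLaurent, Finset.sum_eq_single t, if_pos rfl, Finset.sum_eq_zero, add_zero]
  · exact fun j _ => if_neg (by linarith [ha j, ha t])
  · exact fun j _ hj => if_neg (ht j hj).ne
  · simp

end PlusMinus

end AddMonoidAlgebra

open AddMonoidAlgebra in
theorem stmt_1_general {k : ℕ} (a : Fin (k + 1) → ℤ)
    (ha_pos : ∀ i, 0 < a i) (ha_mono : StrictMono a)
    (Q : Type*) [NormedRing Q] [StarRing Q] [CStarRing Q]
    [NormedAlgebra ℂ Q]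
    (α : C(Circle, ℂ) →⋆ₐ[ℂ] C(Circle, Q))
    (B C : Fin (k + 1) → Fin (k + 1) → Q)
    (hα : ∀ i, ∀ z : Circle,
      α (chi (a i)) z
        = ∑ j, ((z ^ (a j) : Circle) : ℂ) • B i j
          + ∑ j, ((z ^ (-(a j)) : Circle) : ℂ) • C i j)
    (p q l m : Fin (k + 1)) (h : a p + a q = a l + a m) :
    B p (Fin.last k) * B q (Fin.last k) = B l (Fin.last k) * B m (Fin.last k) := by
  have ht : ∀ j ≠ Fin.last k, a j < a (Fin.last k) :=
    fun j hj => ha_mono (Fin.lt_last_iff_ne_last.2 hj)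
  set P := fun i => pmLaurent a (B i) (C i)
  have hP : ∀ i, circleEval Q (P i) = α (chi (a i)) :=
    fun i => funext fun z => by simp [P, circleEval_pmLaurent, hα]
  have hPP : P p * P q = P l * P m := by
    refine circleEval_injective ?_
    simp only [map_mul, hP]
    rw [← ContinuousMap.coe_mul, ← ContinuousMap.coe_mul, ← map_mul, ← map_mul, ← chi_add,
      ← chi_add, h]
  have hvanish : ∀ i n, a (Fin.last k) < n → (P i).coeff n = 0 :=
    fun _ _ => coeff_pmLaurent_of_lt ha_pos fun j => ha_mono.monotone (Fin.le_last j)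
  have htop := congrArg (coeff · (a (Fin.last k) + a (Fin.last k))) hPP
  simpa only [coeff_mul_add_of_coeff_eq_zero_of_lt (hvanish _) (hvanish _), P,
    coeff_pmLaurent_self ha_pos ht] using htop

theorem stmt_1 {k : ℕ} (a : Fin (k + 1) → ℤ)
    (ha_pos : ∀ i, 0 < a i) (ha_mono : StrictMono a)
    (Q : Type*) [NormedRing Q] [StarRing Q] [CStarRing Q]
    [NormedAlgebra ℂ Q] [StarModule ℂ Q] [CompleteSpace Q]
    (α : C(Circle, ℂ) →⋆ₐ[ℂ] C(Circle, Q))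
    (B C : Fin (k + 1) → Fin (k + 1) → Q)
    (hα : ∀ i, ∀ z : Circle,
      α (chi (a i)) z
        = ∑ j, ((z ^ (a j) : Circle) : ℂ) • B i j
          + ∑ j, ((z ^ (-(a j)) : Circle) : ℂ) • C i j)
    (p q l m : Fin (k + 1)) (h : a p + a q = a l + a m) :
    B p (Fin.last k) * B q (Fin.last k) = B l (Fin.last k) * B m (Fin.last k) :=
  stmt_1_general a ha_pos ha_mono Q α B C hα p q l m h
end

section
/- Assume in addition that the fundamental coefficient matrix is diagonal, i.e. B_{ij} = 0 and C_{ij} = 0 whenever j ≠ i, so that α(χ_{a_i}) is the function z ↦ z^{a_i}·B_{ii} + z^{-a_i}·C_{ii}. If p, q are positive integers and i, j ∈ {1,…,k} satisfy p·a_i = q·a_j, then B_{ii}^p = B_{jj}^q and C_{ii}^p = C_{jj}^q. (This is the relation A_{i(2i-1)}^{p(i,j)} = A_{j(2j-1)}^{q(i,j)} and A_{i(2i)}^{p(i,j)} = A_{j(2j)}^{q(i,j)} used at the end of the proof of Theorem 3.1, obtained by comparing the top and bottom Fourier coefficients of α(χ_{a_i})^p = α(χ_{a_j})^q.) -/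
namespace Polynomial

theorem eval_pow_algebraMap {R A : Type*} [CommSemiring R] [Semiring A] [Algebra R A] (P : A[X])
    (n : ℕ) (x : R) : (P ^ n).eval (algebraMap R A x) = P.eval (algebraMap R A x) ^ n :=
  map_pow (eval₂RingHom' (RingHom.id A) _ fun a => (Algebra.commutes x a).symm) P n

section Semiring

variable {R : Type*} [Semiring R]

theorem coeff_C_mul_X_pow_add_C_pow (b c : R) {n : ℕ} (hn : n ≠ 0) (p : ℕ) :
    ((C b * X ^ n + C c) ^ p).coeff (p * n) = b ^ p := by
  rw [coeff_pow_of_natDegree_le (by compute_degree)]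
  simp [coeff_C, hn]

theorem coeff_zero_C_mul_X_pow_add_C_pow (b c : R) {n : ℕ} (hn : n ≠ 0) (p : ℕ) :
    ((C b * X ^ n + C c) ^ p).coeff 0 = c ^ p := by
  rw [← constantCoeff_apply, map_pow, constantCoeff_apply]
  simp [hn.symm]

end Semiring

variable {K Q : Type*} [Field K] [Ring Q] [Algebra K Q]

theorem eq_zero_of_eval_algebraMap_eq_zero {P : Q[X]} {S : Set K} (hS : S.Infinite)
    (h : ∀ x ∈ S, P.eval (algebraMap K Q x) = 0) : P = 0 := by
  ext n
  rw [coeff_zero, ← Module.forall_dual_apply_eq_zero_iff K]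
  intro φ
  let Pφ : K[X] := ∑ m ∈ P.support, monomial m (φ (P.coeff m))
  have hcoeff : Pφ.coeff n = φ (P.coeff n) := by
    simp only [Pφ, finsetSum_coeff, coeff_monomial, Finset.sum_ite_eq', mem_support_iff]
    split_ifs with hn
    · rfl
    · rw [notMem_support_iff.mp hn, map_zero]
  have heval : ∀ x, Pφ.eval x = φ (P.eval (algebraMap K Q x)) := by
    intro x
    simp only [Pφ, eval_finsetSum, eval_monomial]
    rw [eval_eq_sum, sum_def, map_sum]
    simp only [← map_pow, ← Algebra.commutes, ← Algebra.smul_def, map_smul, smul_eq_mul, mul_comm]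
  have hPφ : Pφ = 0 :=
    eq_zero_of_infinite_isRoot _ (hS.mono fun x hx => by simp [IsRoot, heval, h x hx])
  rw [← hcoeff, hPφ, coeff_zero]

theorem eval_C_mul_X_pow_add_C_algebraMap (b c : Q) (m : ℕ) {w : K} (hw : w ≠ 0) :
    (C b * X ^ (2 * m) + C c).eval (algebraMap K Q w) = w ^ m • (w ^ m • b + (w ^ m)⁻¹ • c) := by
  rw [eval_add, eval_mul_X_pow, eval_C, eval_C, ← map_pow, ← Algebra.commutes, ← Algebra.smul_def,
    smul_add, smul_smul, smul_smul, ← pow_add, ← two_mul, mul_inv_cancel₀ (pow_ne_zero m hw),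
    one_smul]

theorem pow_eq_pow_of_laurentBinomial_pow_eq {S : Set K} (hS : S.Infinite) (hS0 : 0 ∉ S)
    {m n p q : ℕ} (hm : m ≠ 0) (hn : n ≠ 0) (hpq : p * m = q * n) {b c b' c' : Q}
    (h : ∀ w ∈ S, (w ^ m • b + (w ^ m)⁻¹ • c) ^ p = (w ^ n • b' + (w ^ n)⁻¹ • c') ^ q) :
    b ^ p = b' ^ q ∧ c ^ p = c' ^ q := by
  have hP : (C b * X ^ (2 * m) + C c) ^ p = (C b' * X ^ (2 * n) + C c') ^ q := by
    refine sub_eq_zero.mp <| eq_zero_of_eval_algebraMap_eq_zero hS fun w hw => ?_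
    have hw0 : w ≠ 0 := fun h0 => hS0 (h0 ▸ hw)
    rw [eval_sub, eval_pow_algebraMap, eval_pow_algebraMap,
      eval_C_mul_X_pow_add_C_algebraMap _ _ _ hw0, eval_C_mul_X_pow_add_C_algebraMap _ _ _ hw0,
      _root_.smul_pow, _root_.smul_pow, h w hw, ← pow_mul, ← pow_mul, mul_comm m, mul_comm n, hpq,
      sub_self]
  constructor
  · rw [← coeff_C_mul_X_pow_add_C_pow b c (by omega : 2 * m ≠ 0),
      ← coeff_C_mul_X_pow_add_C_pow b' c' (by omega : 2 * n ≠ 0), mul_left_comm p,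
      mul_left_comm q, hpq, hP]
  · rw [← coeff_zero_C_mul_X_pow_add_C_pow b c (by omega : 2 * m ≠ 0),
      ← coeff_zero_C_mul_X_pow_add_C_pow b' c' (by omega : 2 * n ≠ 0), hP]

end Polynomial

instance : Infinite Circle :=
  have : Infinite (Set.Ioc (-Real.pi) Real.pi) :=
    (Set.Ioc_infinite (by linarith [Real.pi_pos])).to_subtype
  Infinite.of_injective (fun t : Set.Ioc (-Real.pi) Real.pi => Circle.exp t)
    fun s t (hst : Circle.exp s = Circle.exp t) =>
      Subtype.ext <| by rw [← Circle.arg_exp s.2.1 s.2.2, ← Circle.arg_exp t.2.1 t.2.2, hst]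

theorem chi_pow (n : ℤ) (p : ℕ) : chi n ^ p = chi (p * n) := by
  ext z
  simp [chi, mul_comm (p : ℤ), zpow_mul]

theorem stmt_14_general {k : ℕ} (a : Fin (k + 1) → ℤ)
    (ha_pos : ∀ i, 0 < a i)
    (Q : Type*) [NormedRing Q] [StarRing Q] [CStarRing Q]
    [NormedAlgebra ℂ Q]
    (α : C(Circle, ℂ) →⋆ₐ[ℂ] C(Circle, Q))
    (B C : Fin (k + 1) → Fin (k + 1) → Q)
    (hα : ∀ i, ∀ z : Circle,
      α (chi (a i)) z
        = ∑ j, ((z ^ (a j) : Circle) : ℂ) • B i j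
          + ∑ j, ((z ^ (-(a j)) : Circle) : ℂ) • C i j)
    (hdiag : ∀ i j, j ≠ i → B i j = 0 ∧ C i j = 0)
    (p q : ℕ) (i j : Fin (k + 1))
    (h : (p : ℤ) * a i = (q : ℤ) * a j) :
    B i i ^ p = B j j ^ q ∧ C i i ^ p = C j j ^ q := by
  have hα_diag (l : Fin (k + 1)) (m : ℕ) (hm : a l = m) (z : Circle) :
      α (chi (a l)) z = (z ^ m : ℂ) • B l l + (z ^ m : ℂ)⁻¹ • C l l := by
    rw [hα, Fintype.sum_eq_single l fun j hj => by rw [(hdiag l j hj).1, smul_zero],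
      Fintype.sum_eq_single l fun j hj => by rw [(hdiag l j hj).2, smul_zero], hm]
    simp
  obtain ⟨m, hm⟩ := Int.eq_ofNat_of_zero_le (ha_pos i).le
  obtain ⟨n, hn⟩ := Int.eq_ofNat_of_zero_le (ha_pos j).le
  refine Polynomial.pow_eq_pow_of_laurentBinomial_pow_eq
    (Set.infinite_range_of_injective (α := Circle) Circle.coe_injective)
    (fun ⟨z, hz⟩ => z.coe_ne_zero hz) (m := m) (n := n) (by have := ha_pos i; omega)
    (by have := ha_pos j; omega) (by rw [hm, hn] at h; exact_mod_cast h) ?_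
  rintro _ ⟨z, rfl⟩
  rw [← hα_diag i m hm, ← hα_diag j n hn, ← ContinuousMap.pow_apply, ← ContinuousMap.pow_apply,
    ← map_pow, ← map_pow, chi_pow, chi_pow, h]

theorem stmt_14 {k : ℕ} (a : Fin (k + 1) → ℤ)
    (ha_pos : ∀ i, 0 < a i) (ha_mono : StrictMono a)
    (Q : Type*) [NormedRing Q] [StarRing Q] [CStarRing Q]
    [NormedAlgebra ℂ Q] [StarModule ℂ Q] [CompleteSpace Q]
    (α : C(Circle, ℂ) →⋆ₐ[ℂ] C(Circle, Q))
    (B C : Fin (k + 1) → Fin (k + 1) → Q)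
    (hα : ∀ i, ∀ z : Circle,
      α (chi (a i)) z
        = ∑ j, ((z ^ (a j) : Circle) : ℂ) • B i j
          + ∑ j, ((z ^ (-(a j)) : Circle) : ℂ) • C i j)
    (hdiag : ∀ i j, j ≠ i → B i j = 0 ∧ C i j = 0)
    (p q : ℕ) (hp : 0 < p) (hq : 0 < q) (i j : Fin (k + 1))
    (h : (p : ℤ) * a i = (q : ℤ) * a j) :
    B i i ^ p = B j j ^ q ∧ C i i ^ p = C j j ^ q :=
  stmt_14_general a ha_pos Q α B C hα hdiag p q i j h
end
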